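/- Let N, n, r ≥ 1, let A be an N×N real matrix with nonnegative entries that is doubly stochastic (all row sums and all column sums equal 1), set L = I_N − A, κ := ‖A − J‖ (spectral norm) with J = (1/N)·𝟙𝟙ᵀ. Let h₁, …, h_N : ℝⁿ × ℝʳ → ℝʳ be arbitrary maps. Let x, x⁺ ∈ (ℝⁿ)^N, χ, χ⁺ ∈ (ℝʳ)^N, and y, e ∈ (ℝʳ)^N, and define y⁺ ∈ (ℝʳ)^N by y⁺ᵢ := Σⱼ L_{ij}·eⱼ + hᵢ(x⁺ᵢ, χ⁺ᵢ) − hᵢ(xᵢ, χᵢ) + Σⱼ A_{ij}·yⱼ. Writing ȳ⁺ := (1/N)Σᵢ y⁺ᵢ and ȳ := (1/N)Σᵢ yᵢ, one has ‖y⁺ − 𝟙_N ⊗ ȳ⁺‖ ≤ κ·‖y − 𝟙_N ⊗ ȳ‖ + (Σᵢ ‖hᵢ(x⁺ᵢ, χ⁺ᵢ) − hᵢ(xᵢ, χᵢ)‖²)^{1/2} + 2‖e‖, where block tuples carry the Euclidean norm ‖v‖ = (Σᵢ‖vᵢ‖²)^{1/2} and 𝟙_N ⊗ ȳ denotes the N-tuple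 with every block equal to ȳ. -/

import Mathlib

/-! Write `Δᵢ = hᵢ(x⁺ᵢ, χ⁺ᵢ) − hᵢ(xᵢ, χᵢ)`. The columns of `A` sum to one, so those of `L`
sum to zero and `ȳ⁺ = ȳ + Δ̄`; the rows of `A` sum to one, so `A(𝟙⊗ȳ) = 𝟙⊗ȳ`; and `J` kills
`y − 𝟙⊗ȳ`. Hence `y⁺ − 𝟙⊗ȳ⁺ = (A − J)(y − 𝟙⊗ȳ) + (Δ − 𝟙⊗Δ̄) + L e`. The first term is at most
`κ‖y − 𝟙⊗ȳ‖` because a matrix acts on block tuples coordinatewise, the second at most `‖Δ‖`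
because subtracting the mean is an orthogonal projection, and the third at most
`‖e‖ + ‖A e‖ ≤ 2‖e‖` because Jensen's inequality for `‖·‖²`, weighted by the rows of `A`, makes
`A` nonexpansive. -/

open Matrix
open scoped Matrix.Norms.L2Operator

section BlockTuples

variable {V : Type*} {N : ℕ}

/-- `𝟙_N ⊗ v`. -/
def blockConst (N : ℕ) (v : V) : PiLp 2 (fun _ : Fin N => V) := WithLp.toLp 2 fun _ => v

@[simp] lemma blockConst_apply (v : V) (i : Fin N) : blockConst N v i = v := rfl

variable [NormedAddCommGroup V] [NormedSpace ℝ V]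

noncomputable def blockMean (v : PiLp 2 (fun _ : Fin N => V)) : V := (N : ℝ)⁻¹ • ∑ i, v i

/-- `(M ⊗ I) v`. -/
def blockMul (M : Matrix (Fin N) (Fin N) ℝ) (v : PiLp 2 (fun _ : Fin N => V)) :
    PiLp 2 (fun _ : Fin N => V) :=
  WithLp.toLp 2 fun i => ∑ j, M i j • v j

@[simp] lemma blockMul_apply (M : Matrix (Fin N) (Fin N) ℝ) (v : PiLp 2 (fun _ : Fin N => V))
    (i : Fin N) : blockMul M v i = ∑ j, M i j • v j := rfl

lemma blockMean_add (v w : PiLp 2 (fun _ : Fin N => V)) :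
    blockMean (v + w) = blockMean v + blockMean w := by
  simp [blockMean, Finset.sum_add_distrib, smul_add]

lemma sum_sub_blockConst_blockMean (v : PiLp 2 (fun _ : Fin N => V)) :
    ∑ i, (v - blockConst N (blockMean v)) i = 0 := by
  rcases Nat.eq_zero_or_pos N with rfl | hN
  · simp
  have hN' : (N : ℝ) ≠ 0 := by positivity
  simp [blockMean, Finset.sum_sub_distrib, ← Nat.cast_smul_eq_nsmul ℝ, smul_smul, hN']

lemma blockMean_sub_blockConst_blockMean (v : PiLp 2 (fun _ : Fin N => V)) :
    blockMean (v - blockConst N (blockMean v)) = 0 := by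
  rw [blockMean, sum_sub_blockConst_blockMean, smul_zero]

lemma blockMul_one (v : PiLp 2 (fun _ : Fin N => V)) : blockMul 1 v = v := by
  ext i : 1
  simp [Matrix.one_apply, ite_smul]

lemma blockMul_sub_left (M M' : Matrix (Fin N) (Fin N) ℝ) (v : PiLp 2 (fun _ : Fin N => V)) :
    blockMul (M - M') v = blockMul M v - blockMul M' v := by
  ext i : 1
  simp [sub_smul, Finset.sum_sub_distrib]

lemma blockMul_sub (M : Matrix (Fin N) (Fin N) ℝ) (v w : PiLp 2 (fun _ : Fin N => V)) :
    blockMul M (v - w) = blockMul M v - blockMul M w := by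
  ext i : 1
  simp [smul_sub, Finset.sum_sub_distrib]

lemma blockMul_blockConst {A : Matrix (Fin N) (Fin N) ℝ} (hA_row : ∀ i, ∑ j, A i j = 1) (v : V) :
    blockMul A (blockConst N v) = blockConst N v := by
  ext i : 1
  simp [← Finset.sum_smul, hA_row]

lemma blockMean_blockMul {M : Matrix (Fin N) (Fin N) ℝ} {c : ℝ} (hcol : ∀ j, ∑ i, M i j = c)
    (v : PiLp 2 (fun _ : Fin N => V)) : blockMean (blockMul M v) = c • blockMean v := by
  simp only [blockMean, blockMul_apply]
  rw [Finset.sum_comm]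
  simp [← Finset.sum_smul, hcol, Finset.smul_sum, smul_comm c]

lemma blockMul_eq_blockConst_blockMean {J : Matrix (Fin N) (Fin N) ℝ} (hJ : ∀ i j, J i j = 1 / N)
    (v : PiLp 2 (fun _ : Fin N => V)) : blockMul J v = blockConst N (blockMean v) := by
  ext i : 1
  simp [hJ, blockMean, Finset.smul_sum]

lemma norm_blockMul_le_of_mem_doublyStochastic
    {A : Matrix (Fin N) (Fin N) ℝ} (hA : A ∈ doublyStochastic ℝ (Fin N))
    (v : PiLp 2 (fun _ : Fin N => V)) : ‖blockMul A v‖ ≤ ‖v‖ := by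
  have hjensen : ∀ i, ‖∑ j, A i j • v j‖ ^ 2 ≤ ∑ j, A i j * ‖v j‖ ^ 2 := fun i =>
    ((convexOn_norm convex_univ).pow (fun _ _ => norm_nonneg _) 2).map_sum_le
      (fun j _ => nonneg_of_mem_doublyStochastic hA) (sum_row_of_mem_doublyStochastic hA i)
      (fun _ _ => Set.mem_univ _)
  refine (sq_le_sq₀ (norm_nonneg _) (norm_nonneg _)).1 ?_
  calc ‖blockMul A v‖ ^ 2 = ∑ i, ‖∑ j, A i j • v j‖ ^ 2 := PiLp.norm_sq_eq_of_L2 _ _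
    _ ≤ ∑ i, ∑ j, A i j * ‖v j‖ ^ 2 := Finset.sum_le_sum fun i _ => hjensen i
    _ = ∑ j, ‖v j‖ ^ 2 := by
      rw [Finset.sum_comm]
      simp [← Finset.sum_mul, sum_col_of_mem_doublyStochastic hA]
    _ = ‖v‖ ^ 2 := (PiLp.norm_sq_eq_of_L2 _ _).symm

lemma norm_blockMul_one_sub_le_of_mem_doublyStochastic
    {A : Matrix (Fin N) (Fin N) ℝ} (hA : A ∈ doublyStochastic ℝ (Fin N))
    (v : PiLp 2 (fun _ : Fin N => V)) : ‖blockMul (1 - A) v‖ ≤ 2 * ‖v‖ := by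
  rw [blockMul_sub_left, blockMul_one, two_mul]
  exact (norm_sub_le _ _).trans
    (add_le_add_right (norm_blockMul_le_of_mem_doublyStochastic hA v) _)

lemma tracking_step_sub_blockConst_blockMean {A J : Matrix (Fin N) (Fin N) ℝ}
    (hA_row : ∀ i, ∑ j, A i j = 1) (hA_col : ∀ j, ∑ i, A i j = 1) (hJ : ∀ i j, J i j = 1 / N)
    {e Δ y yplus : PiLp 2 (fun _ : Fin N => V)}
    (hyplus : yplus = blockMul (1 - A) e + Δ + blockMul A y) :
    yplus - blockConst N (blockMean yplus) =
      blockMul (A - J) (y - blockConst N (blockMean y)) + (Δ - blockConst N (blockMean Δ))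
        + blockMul (1 - A) e := by
  have hL_col : ∀ j, ∑ i, (1 - A) i j = 0 := fun j => by
    simp [Finset.sum_sub_distrib, hA_col, Matrix.one_apply]
  have hmean : blockMean yplus = blockMean Δ + blockMean y := by
    simp only [hyplus, blockMean_add, blockMean_blockMul hL_col, blockMean_blockMul hA_col,
      zero_smul, one_smul, zero_add]
  have hJ_zero : blockMul J (y - blockConst N (blockMean y)) = 0 := by
    ext i : 1
    simp [blockMul_eq_blockConst_blockMean hJ, blockMean_sub_blockConst_blockMean]
  rw [blockMul_sub_left, hJ_zero, blockMul_sub, blockMul_blockConst hA_row, hmean]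
  ext i : 1
  simp only [hyplus, PiLp.add_apply, PiLp.sub_apply, blockConst_apply, PiLp.zero_apply]
  abel

end BlockTuples

section InnerProduct

variable {V : Type*} [NormedAddCommGroup V] [InnerProductSpace ℝ V] {N : ℕ}

lemma inner_sub_blockConst_blockMean (v : PiLp 2 (fun _ : Fin N => V)) (u : V) :
    inner ℝ (v - blockConst N (blockMean v)) (blockConst N u) = 0 := by
  simp only [PiLp.inner_apply, blockConst_apply, ← sum_inner, sum_sub_blockConst_blockMean,
    inner_zero_left]

lemma norm_sub_blockConst_blockMean_le (v : PiLp 2 (fun _ : Fin N => V)) :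
    ‖v - blockConst N (blockMean v)‖ ≤ ‖v‖ := by
  have hpyth :=
    norm_add_sq_eq_norm_sq_add_norm_sq_real (inner_sub_blockConst_blockMean v (blockMean v))
  rw [sub_add_cancel] at hpyth
  nlinarith [norm_nonneg v, norm_nonneg (v - blockConst N (blockMean v)),
    mul_self_nonneg ‖blockConst N (blockMean v)‖]

end InnerProduct

section EuclideanBlocks

variable {N : ℕ} {ι : Type*}

def blockCoord (w : PiLp 2 (fun _ : Fin N => EuclideanSpace ℝ ι)) (k : ι) :
    EuclideanSpace ℝ (Fin N) :=
  WithLp.toLp 2 fun j => w j k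

variable [Fintype ι]

lemma norm_sq_eq_sum_norm_sq_blockCoord (w : PiLp 2 (fun _ : Fin N => EuclideanSpace ℝ ι)) :
    ‖w‖ ^ 2 = ∑ k, ‖blockCoord w k‖ ^ 2 := by
  simp only [PiLp.norm_sq_eq_of_L2, blockCoord]
  exact Finset.sum_comm

lemma blockCoord_blockMul (B : Matrix (Fin N) (Fin N) ℝ)
    (w : PiLp 2 (fun _ : Fin N => EuclideanSpace ℝ ι)) (k : ι) :
    blockCoord (blockMul B w) k =
      (EuclideanSpace.equiv (Fin N) ℝ).symm (B *ᵥ (blockCoord w k).ofLp) := by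
  ext i
  simp [blockCoord, mulVec, dotProduct]

lemma norm_blockMul_le (B : Matrix (Fin N) (Fin N) ℝ)
    (w : PiLp 2 (fun _ : Fin N => EuclideanSpace ℝ ι)) : ‖blockMul B w‖ ≤ ‖B‖ * ‖w‖ := by
  refine (sq_le_sq₀ (norm_nonneg _) (by positivity)).1 ?_
  rw [norm_sq_eq_sum_norm_sq_blockCoord, mul_pow, norm_sq_eq_sum_norm_sq_blockCoord,
    Finset.mul_sum]
  refine Finset.sum_le_sum fun k _ => ?_
  rw [blockCoord_blockMul, ← mul_pow]
  exact pow_le_pow_left₀ (norm_nonneg _) (l2_opNorm_mulVec B _) 2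

end EuclideanBlocks

theorem stmt10_general (N n r : ℕ)
    (A : Matrix (Fin N) (Fin N) ℝ)
    (hA_nonneg : ∀ i j, 0 ≤ A i j)
    (hA_row : ∀ i, ∑ j, A i j = 1)
    (hA_col : ∀ j, ∑ i, A i j = 1)
    (L : Matrix (Fin N) (Fin N) ℝ) (hL : L = 1 - A)
    (J : Matrix (Fin N) (Fin N) ℝ) (hJ : ∀ i j, J i j = 1 / N)
    (κ : ℝ) (hκ : κ = ‖A - J‖)
    (h : Fin N → EuclideanSpace ℝ (Fin n) → EuclideanSpace ℝ (Fin r) →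
      EuclideanSpace ℝ (Fin r))
    (x xplus : PiLp 2 (fun _ : Fin N => EuclideanSpace ℝ (Fin n)))
    (χ χplus y e yplus : PiLp 2 (fun _ : Fin N => EuclideanSpace ℝ (Fin r)))
    (hyplus : ∀ i, yplus i =
      (∑ j, L i j • e j) + h i (xplus i) (χplus i) - h i (x i) (χ i) + ∑ j, A i j • y j)
    (ybar ybarplus : EuclideanSpace ℝ (Fin r))
    (hybar : ybar = ((N : ℝ)⁻¹) • ∑ i, y i)
    (hybarplus : ybarplus = ((N : ℝ)⁻¹) • ∑ i, yplus i) :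
    ‖yplus - (show PiLp 2 (fun _ : Fin N => EuclideanSpace ℝ (Fin r)) from WithLp.toLp 2 (fun _ => ybarplus))‖
      ≤ κ * ‖y - (show PiLp 2 (fun _ : Fin N => EuclideanSpace ℝ (Fin r)) from WithLp.toLp 2 (fun _ => ybar))‖
        + Real.sqrt (∑ i, ‖h i (xplus i) (χplus i) - h i (x i) (χ i)‖ ^ 2)
        + 2 * ‖e‖ := by
  have hA : A ∈ doublyStochastic ℝ (Fin N) :=
    mem_doublyStochastic_iff_sum.2 ⟨hA_nonneg, hA_row, hA_col⟩
  set Δ : PiLp 2 (fun _ : Fin N => EuclideanSpace ℝ (Fin r)) :=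
    WithLp.toLp 2 fun i => h i (xplus i) (χplus i) - h i (x i) (χ i)
  have hstep : yplus = blockMul (1 - A) e + Δ + blockMul A y :=
    PiLp.ext fun i => by rw [hyplus i, ← hL, add_sub_assoc]; rfl
  have hdecomp := tracking_step_sub_blockConst_blockMean hA_row hA_col hJ hstep
  rw [show blockMean yplus = ybarplus from hybarplus.symm,
    show blockMean y = ybar from hybar.symm] at hdecomp
  calc _ = ‖blockMul (A - J) (y - blockConst N ybar) + (Δ - blockConst N (blockMean Δ))
          + blockMul (1 - A) e‖ := congrArg norm hdecomp
    _ ≤ ‖blockMul (A - J) (y - blockConst N ybar)‖ + ‖Δ - blockConst N (blockMean Δ)‖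
          + ‖blockMul (1 - A) e‖ := norm_add₃_le
    _ ≤ _ := by
      rw [hκ, ← PiLp.norm_eq_of_L2 Δ]
      gcongr
      · exact norm_blockMul_le _ _
      · exact norm_sub_blockConst_blockMean_le Δ
      · exact norm_blockMul_one_sub_le_of_mem_doublyStochastic hA e

/-- one-step consensus-error bound for the gradient-sum tracker.
With `A` doubly stochastic nonnegative, `L = I − A`, `κ = ‖A − J‖` (spectral norm),
arbitrary maps `hᵢ : ℝⁿ × ℝʳ → ℝʳ` and
`y⁺ᵢ = Σⱼ L_{ij} eⱼ + hᵢ(x⁺ᵢ, χ⁺ᵢ) − hᵢ(xᵢ, χᵢ) + Σⱼ A_{ij} yⱼ`, one has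
`‖y⁺ − 𝟙⊗ȳ⁺‖ ≤ κ‖y − 𝟙⊗ȳ‖ + (Σᵢ‖hᵢ(x⁺ᵢ,χ⁺ᵢ) − hᵢ(xᵢ,χᵢ)‖²)^{1/2} + 2‖e‖`. -/
theorem stmt10 (N n r : ℕ) (hN : 1 ≤ N) (hn : 1 ≤ n) (hr : 1 ≤ r)
    (A : Matrix (Fin N) (Fin N) ℝ)
    (hA_nonneg : ∀ i j, 0 ≤ A i j)
    (hA_row : ∀ i, ∑ j, A i j = 1)
    (hA_col : ∀ j, ∑ i, A i j = 1)
    (L : Matrix (Fin N) (Fin N) ℝ) (hL : L = 1 - A)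
    (J : Matrix (Fin N) (Fin N) ℝ) (hJ : ∀ i j, J i j = 1 / N)
    (κ : ℝ) (hκ : κ = ‖A - J‖)
    (h : Fin N → EuclideanSpace ℝ (Fin n) → EuclideanSpace ℝ (Fin r) →
      EuclideanSpace ℝ (Fin r))
    (x xplus : PiLp 2 (fun _ : Fin N => EuclideanSpace ℝ (Fin n)))
    (χ χplus y e yplus : PiLp 2 (fun _ : Fin N => EuclideanSpace ℝ (Fin r)))
    (hyplus : ∀ i, yplus i =
      (∑ j, L i j • e j) + h i (xplus i) (χplus i) - h i (x i) (χ i) + ∑ j, A i j • y j)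
    (ybar ybarplus : EuclideanSpace ℝ (Fin r))
    (hybar : ybar = ((N : ℝ)⁻¹) • ∑ i, y i)
    (hybarplus : ybarplus = ((N : ℝ)⁻¹) • ∑ i, yplus i) :
    ‖yplus - (show PiLp 2 (fun _ : Fin N => EuclideanSpace ℝ (Fin r)) from WithLp.toLp 2 (fun _ => ybarplus))‖
      ≤ κ * ‖y - (show PiLp 2 (fun _ : Fin N => EuclideanSpace ℝ (Fin r)) from WithLp.toLp 2 (fun _ => ybar))‖
        + Real.sqrt (∑ i, ‖h i (xplus i) (χplus i) - h i (x i) (χ i)‖ ^ 2)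
        + 2 * ‖e‖ :=
  stmt10_general N n r A hA_nonneg hA_row hA_col L hL J hJ κ hκ h x xplus χ χplus y e yplus hyplus
    ybar ybarplus hybar hybarplus
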